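/- Symmetric bar induction follows from classical logic and dependent choice: fix φ : (ℕ → X) → ℕ and a predicate P on finite partial functions ℕ →. X. Assume (1) for all α : ℕ → X there exists n with P([α]^φ_n), and (2) for every φ-thread u, if (φ(û) ∉ dom(u) → ∀x, P(u ⊕ (φ(û), x))) then P(u). Then P(∅). -/
import Mathlib

open scoped Classical

universe u

/-- Domain of a partial function `ℕ → Option X`. -/
def dom {X : Type u} (f : ℕ → Option X) : Set ℕ := {n | f n ≠ none}

/-- Canonical total extension of a partial function by a default element. -/
def ext {X : Type u} (x0 : X) (f : ℕ → Option X) : ℕ → X := fun n => (f n).getD x0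

/-- The partial function defined only at `n`, with value `x`. -/
def single {X : Type u} (n : ℕ) (x : X) : ℕ → Option X :=
  fun m => if m = n then some x else none

/-- Left-biased merge `u @ v` of two partial functions. -/
def merge {X : Type u} (f g : ℕ → Option X) : ℕ → Option X :=
  fun n => (f n).elim (g n) some

/-- Update `u ⊕ (n, x)`: keeps `u`'s value where defined, adds `x` at `n`. -/
def upd {X : Type u} (f : ℕ → Option X) (n : ℕ) (x : X) : ℕ → Option X :=
  merge f (single n x)

/-- Extension order `u ⊑ v`. -/
def sub {X : Type u} (f g : ℕ → Option X) : Prop :=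
  ∀ n x, f n = some x → g n = some x

/-- The φ-thread of a partial function `u` of length `i`. -/
def threadP {X : Type u} (x0 : X) (φ : (ℕ → X) → ℕ) (f : ℕ → Option X) :
    ℕ → ℕ → Option X
  | 0 => fun _ => none
  | i + 1 =>
    let v := threadP x0 φ f i
    let n := φ (ext x0 v)
    match f n with
    | some x => upd v n x
    | none => v

/-- The φ-thread of a total function `α` of length `i`. -/
def threadT {X : Type u} (x0 : X) (φ : (ℕ → X) → ℕ) (α : ℕ → X) :
    ℕ → ℕ → Option X
  | 0 => fun _ => none
  | i + 1 =>
    let v := threadT x0 φ α i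
    let n := φ (ext x0 v)
    upd v n (α n)

/-- `S_φ(u)`: `u` is a φ-thread. -/
def isThread {X : Type u} (x0 : X) (φ : (ℕ → X) → ℕ) (f : ℕ → Option X) : Prop :=
  f = threadP x0 φ f (dom f).ncard

/-- Bounded search: least `i ≤ b` with `p i`, else `b`. -/
noncomputable def mu (b : ℕ) (p : ℕ → Prop) : ℕ :=
  if h : ∃ i, i ≤ b ∧ p i then Nat.find h else b

section Aux

variable {X : Type u} (x0 : X) (φ : (ℕ → X) → ℕ)

lemma mem_dom' {f : ℕ → Option X} {n : ℕ} : n ∈ dom f ↔ f n ≠ none := Iff.rfl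

lemma upd_of_some' {f : ℕ → Option X} {m : ℕ} {y : X} (h : f m = some y) (n : ℕ) (x : X) :
    upd f n x m = some y := by simp [upd, merge, h]

lemma upd_of_none' {f : ℕ → Option X} {m : ℕ} (h : f m = none) (n : ℕ) (x : X) :
    upd f n x m = if m = n then some x else none := by simp [upd, merge, single, h]

lemma upd_cases' {f : ℕ → Option X} {n m : ℕ} {x y : X}
    (h : upd f n x m = some y) : f m = some y ∨ (f m = none ∧ m = n ∧ x = y) := by
  rcases hm : f m with _ | z
  · rw [upd_of_none' hm] at h
    split_ifs at h with he
    exact Or.inr ⟨rfl, he, (Option.some_inj.mp h)⟩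
  · rw [upd_of_some' hm] at h
    exact Or.inl h

lemma dom_upd' (f : ℕ → Option X) (n : ℕ) (x : X) :
    dom (upd f n x) = insert n (dom f) := by
  ext m
  rcases hm : f m with _ | z
  · simp [dom, upd_of_none' hm, hm]
  · simp [dom, upd_of_some' hm, hm]

lemma upd_eq_self' {f : ℕ → Option X} {n : ℕ} (h : f n ≠ none) (x : X) :
    upd f n x = f := by
  funext m
  rcases hm : f m with _ | z
  · rw [upd_of_none' hm, if_neg]
    rintro rfl; exact h hm
  · rw [upd_of_some' hm]

lemma sub_upd' (f : ℕ → Option X) (n : ℕ) (x : X) : sub f (upd f n x) :=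
  fun _ _ h => upd_of_some' h n x

lemma sub_trans' {f g h : ℕ → Option X} (h1 : sub f g) (h2 : sub g h) : sub f h :=
  fun n x hn => h2 n x (h1 n x hn)

lemma dom_empty' : dom (fun _ => (none : Option X)) = ∅ := by
  ext m; simp [dom]

lemma threadP_succ (f : ℕ → Option X) (j : ℕ) :
    threadP x0 φ f (j + 1) =
      match f (φ (ext x0 (threadP x0 φ f j))) with
      | some x => upd (threadP x0 φ f j) (φ (ext x0 (threadP x0 φ f j))) x
      | none => threadP x0 φ f j := rfl

lemma threadP_succ_of_some {f : ℕ → Option X} {j : ℕ} {x : X}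
    (h : f (φ (ext x0 (threadP x0 φ f j))) = some x) :
    threadP x0 φ f (j + 1) = upd (threadP x0 φ f j) (φ (ext x0 (threadP x0 φ f j))) x := by
  rw [threadP_succ, h]

lemma threadP_succ_of_none {f : ℕ → Option X} {j : ℕ}
    (h : f (φ (ext x0 (threadP x0 φ f j))) = none) :
    threadP x0 φ f (j + 1) = threadP x0 φ f j := by
  rw [threadP_succ, h]

lemma threadT_succ (α : ℕ → X) (j : ℕ) :
    threadT x0 φ α (j + 1) =
      upd (threadT x0 φ α j) (φ (ext x0 (threadT x0 φ α j)))
        (α (φ (ext x0 (threadT x0 φ α j)))) := rfl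

lemma threadP_stall {f : ℕ → Option X} {j : ℕ}
    (h : threadP x0 φ f (j + 1) = threadP x0 φ f j) :
    ∀ k, threadP x0 φ f (j + k) = threadP x0 φ f j := by
  intro k
  induction k with
  | zero => rfl
  | succ k ih =>
    rw [show j + (k + 1) = (j + k) + 1 from rfl, threadP_succ, ih, ← threadP_succ, h]

lemma sub_threadP (f : ℕ → Option X) (j : ℕ) : sub (threadP x0 φ f j) f := by
  induction j with
  | zero => intro n x h; simp [threadP] at h
  | succ j ih =>
    rcases h : f (φ (ext x0 (threadP x0 φ f j))) with _ | x
    · rw [threadP_succ_of_none x0 φ h]; exact ih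
    · rw [threadP_succ_of_some x0 φ h]
      intro m y hm
      rcases upd_cases' hm with h' | ⟨_, rfl, rfl⟩
      · exact ih m y h'
      · exact h

lemma dom_threadP_subset (f : ℕ → Option X) (j : ℕ) :
    dom (threadP x0 φ f j) ⊆ dom f := by
  intro m hm
  rcases hv : threadP x0 φ f j m with _ | y
  · exact absurd hv hm
  · rw [mem_dom', sub_threadP x0 φ f j m y hv]; simp

lemma dom_threadP_finite {f : ℕ → Option X} (hf : (dom f).Finite) (j : ℕ) :
    (dom (threadP x0 φ f j)).Finite :=
  hf.subset (dom_threadP_subset x0 φ f j)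

lemma ncard_dom_threadP_le {f : ℕ → Option X} (hf : (dom f).Finite) (j : ℕ) :
    (dom (threadP x0 φ f j)).ncard ≤ j := by
  induction j with
  | zero => simp [threadP, dom_empty']
  | succ j ih =>
    rcases h : f (φ (ext x0 (threadP x0 φ f j))) with _ | x
    · rw [threadP_succ_of_none x0 φ h]; omega
    · rw [threadP_succ_of_some x0 φ h, dom_upd']
      have := Set.ncard_insert_le (φ (ext x0 (threadP x0 φ f j))) (dom (threadP x0 φ f j))
      omega

/-- In a thread, every step below the ncard makes progress: it queries a fresh
point which lies in the domain. -/
lemma thread_query {u : ℕ → Option X} (hfin : (dom u).Finite)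
    (hth : isThread x0 φ u) {j : ℕ} (hj : j < (dom u).ncard) :
    (∃ x, u (φ (ext x0 (threadP x0 φ u j))) = some x) ∧
      threadP x0 φ u j (φ (ext x0 (threadP x0 φ u j))) = none := by
  have hne : threadP x0 φ u (j + 1) ≠ threadP x0 φ u j := by
    intro heq
    have hst := threadP_stall x0 φ heq ((dom u).ncard - j)
    rw [Nat.add_sub_cancel' hj.le] at hst
    have hu : u = threadP x0 φ u j := hth.trans hst
    have h1 := ncard_dom_threadP_le x0 φ hfin j
    rw [← hu] at h1
    omega
  rcases h : u (φ (ext x0 (threadP x0 φ u j))) with _ | x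
  · exact absurd (threadP_succ_of_none x0 φ h) hne
  · refine ⟨⟨x, rfl⟩, ?_⟩
    rcases hv : threadP x0 φ u j (φ (ext x0 (threadP x0 φ u j))) with _ | y
    · rfl
    · exfalso
      apply hne
      rw [threadP_succ_of_some x0 φ h, upd_eq_self']
      rw [hv]; simp

lemma ncard_dom_threadP_eq {u : ℕ → Option X} (hfin : (dom u).Finite)
    (hth : isThread x0 φ u) : ∀ j, j ≤ (dom u).ncard →
    (dom (threadP x0 φ u j)).ncard = j := by
  intro j
  induction j with
  | zero => intro _; simp [threadP, dom_empty']
  | succ j ih =>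
    intro hj
    have hj' : j < (dom u).ncard := hj
    obtain ⟨⟨x, hx⟩, hnone⟩ := thread_query x0 φ hfin hth hj'
    rw [threadP_succ_of_some x0 φ hx, dom_upd',
      Set.ncard_insert_of_notMem (by simpa [mem_dom'] using hnone)
        (dom_threadP_finite x0 φ hfin j), ih (le_of_lt hj')]

lemma threadP_upd_agree {u : ℕ → Option X} (hfin : (dom u).Finite)
    (hth : isThread x0 φ u) (hn : u (φ (ext x0 u)) = none) (x : X) :
    ∀ j, j ≤ (dom u).ncard →
      threadP x0 φ (upd u (φ (ext x0 u)) x) j = threadP x0 φ u j := by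
  intro j
  induction j with
  | zero => intro _; rfl
  | succ j ih =>
    intro hj
    have hj' : j < (dom u).ncard := hj
    obtain ⟨⟨y, hy⟩, _⟩ := thread_query x0 φ hfin hth hj'
    have ih' := ih (le_of_lt hj')
    have hy' : (upd u (φ (ext x0 u)) x) (φ (ext x0 (threadP x0 φ (upd u (φ (ext x0 u)) x) j)))
        = some y := by
      rw [ih', upd_of_some' hy]
    rw [threadP_succ_of_some x0 φ hy', threadP_succ_of_some x0 φ hy, ih']

lemma isThread_upd {u : ℕ → Option X} (hfin : (dom u).Finite)
    (hth : isThread x0 φ u) (hn : φ (ext x0 u) ∉ dom u) (x : X) :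
    isThread x0 φ (upd u (φ (ext x0 u)) x) := by
  have hun : u (φ (ext x0 u)) = none := by
    by_contra h; exact hn h
  have hcard : (dom (upd u (φ (ext x0 u)) x)).ncard = (dom u).ncard + 1 := by
    rw [dom_upd', Set.ncard_insert_of_notMem hn hfin]
  have hvi : threadP x0 φ (upd u (φ (ext x0 u)) x) (dom u).ncard = u :=
    (threadP_upd_agree x0 φ hfin hth hun x _ le_rfl).trans hth.symm
  have hsome : (upd u (φ (ext x0 u)) x)
      (φ (ext x0 (threadP x0 φ (upd u (φ (ext x0 u)) x) (dom u).ncard))) = some x := by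
    rw [hvi, upd_of_none' hun, if_pos rfl]
  unfold isThread
  rw [hcard, threadP_succ_of_some x0 φ hsome, hvi]

lemma isThread_empty : isThread x0 φ (fun _ => (none : Option X)) := by
  unfold isThread
  rw [dom_empty', Set.ncard_empty]
  rfl

end Aux

theorem stmt7 {X : Type u} (x0 : X) (φ : (ℕ → X) → ℕ)
    (P : (ℕ → Option X) → Prop)
    (h1 : ∀ α : ℕ → X, ∃ n, P (threadT x0 φ α n))
    (h2 : ∀ u : ℕ → Option X, (dom u).Finite → isThread x0 φ u →
      ((φ (ext x0 u) ∉ dom u → ∀ x : X, P (upd u (φ (ext x0 u)) x)) → P u)) :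
    P (fun _ => none) := by
  by_contra hP0
  -- the type of "good" partial functions
  have key : ∀ u : ℕ → Option X, (dom u).Finite → isThread x0 φ u → ¬ P u →
      φ (ext x0 u) ∉ dom u ∧ ∃ x, ¬ P (upd u (φ (ext x0 u)) x) := by
    intro u hf ht hnp
    by_contra hcon
    push_neg at hcon
    exact hnp (h2 u hf ht hcon)
  set T := {u : ℕ → Option X // (dom u).Finite ∧ isThread x0 φ u ∧ ¬ P u} with hT
  have step : ∀ t : T, ∃ t' : T, ∃ x : X, t'.1 = upd t.1 (φ (ext x0 t.1)) x := by
    rintro ⟨u, hf, ht, hnp⟩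
    obtain ⟨hmem, x, hx⟩ := key u hf ht hnp
    refine ⟨⟨upd u (φ (ext x0 u)) x, ?_, isThread_upd x0 φ hf ht hmem x, hx⟩, x, rfl⟩
    rw [dom_upd']; exact hf.insert _
  choose f hf using step
  have hgood0 : (dom (fun _ => (none : Option X))).Finite ∧
      isThread x0 φ (fun _ => (none : Option X)) ∧ ¬ P (fun _ => none) :=
    ⟨by rw [dom_empty']; exact Set.finite_empty, isThread_empty x0 φ, hP0⟩
  set useq : ℕ → T := fun i => f^[i] ⟨fun _ => none, hgood0⟩ with huseq
  have hsucc : ∀ i, useq (i + 1) = f (useq i) := by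
    intro i; simp [huseq, Function.iterate_succ_apply']
  have hmono : ∀ i j, i ≤ j → sub (useq i).1 (useq j).1 := by
    intro i j hij
    induction j with
    | zero => rw [Nat.le_zero.mp hij]; exact fun n x h => h
    | succ j ih =>
      rcases Nat.lt_or_ge i (j + 1) with h | h
      · obtain ⟨x, hx⟩ := hf (useq j)
        rw [hsucc j] at *
        refine sub_trans' (ih (Nat.lt_succ_iff.mp h)) ?_
        rw [hx]
        exact sub_upd' _ _ _
      · rw [Nat.le_antisymm hij h]; exact fun n x hx => hx
  have uniq : ∀ m i j x y, (useq i).1 m = some x → (useq j).1 m = some y → x = y := by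
    intro m i j x y hx hy
    rcases le_total i j with h | h
    · have := hmono i j h m x hx
      rw [this] at hy; exact Option.some_inj.mp hy
    · have := hmono j i h m y hy
      rw [this] at hx; exact (Option.some_inj.mp hx).symm
  set α : ℕ → X := fun m =>
    if h : ∃ i x, (useq i).1 m = some x then h.choose_spec.choose else x0 with hα
  have hαval : ∀ m i x, (useq i).1 m = some x → α m = x := by
    intro m i x hx
    have hex : ∃ i x, (useq i).1 m = some x := ⟨i, x, hx⟩
    rw [hα]
    simp only [dif_pos hex]
    exact uniq m hex.choose i _ x hex.choose_spec.choose_spec hx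
  have hdiag : ∀ i, threadT x0 φ α i = (useq i).1 := by
    intro i
    induction i with
    | zero => rw [huseq]; rfl
    | succ i ih =>
      rw [threadT_succ, ih]
      obtain ⟨hf', ht', hnp'⟩ := (useq i).2
      obtain ⟨hmem, -⟩ := key (useq i).1 hf' ht' hnp'
      obtain ⟨x, hx⟩ := hf (useq i)
      rw [← hsucc i] at hx
      have hun : (useq i).1 (φ (ext x0 (useq i).1)) = none := by
        by_contra h; exact hmem h
      have hval : (useq (i + 1)).1 (φ (ext x0 (useq i).1)) = some x := by
        rw [hx, upd_of_none' hun, if_pos rfl]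
      rw [hαval _ (i + 1) x hval, ← hx]
  obtain ⟨k, hk⟩ := h1 α
  rw [hdiag k] at hk
  exact (useq k).2.2.2 hk
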